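/- In the regular hexagonal tiling of the plane with edge length 1, there exists a point p ∈ ℝ² such that the closed disk closedBall(p, 1/2) intersects at least four tiles; that is, the bound of radius 1/2 is tight. (One may take p to be the midpoint of an edge shared by two hexagons.) -/

import Mathlib

open Metric Set

/-- The point `(x, y)` in the Euclidean plane. -/
noncomputable def pt (x y : ℝ) : EuclideanSpace ℝ (Fin 2) :=
  (WithLp.equiv 2 (Fin 2 → ℝ)).symm ![x, y]

/-- The closed regular hexagon with edge length 1 centered at the origin. -/
noncomputable def hexagon : Set (EuclideanSpace ℝ (Fin 2)) :=
  convexHull ℝ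
    {pt 1 0, pt (1 / 2) (Real.sqrt 3 / 2), pt (-(1 / 2)) (Real.sqrt 3 / 2), pt (-1) 0,
      pt (-(1 / 2)) (-(Real.sqrt 3 / 2)), pt (1 / 2) (-(Real.sqrt 3 / 2))}

/-- The tile `H_{m,n} = H + m·(3/2, √3/2) + n·(0, √3)` of the regular hexagonal tiling. -/
noncomputable def hexTile (m n : ℤ) : Set (EuclideanSpace ℝ (Fin 2)) :=
  (fun x => x + (m : ℝ) • pt (3 / 2) (Real.sqrt 3 / 2) + (n : ℝ) • pt 0 (Real.sqrt 3)) ''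
    hexagon

lemma pt_add (a b c d : ℝ) : pt a b + pt c d = pt (a + c) (b + d) := by
  ext i; fin_cases i <;> rfl

lemma pt_smul (r a b : ℝ) : r • pt a b = pt (r * a) (r * b) := by
  ext i; fin_cases i <;> rfl

lemma dist_pt (a b c d : ℝ) : dist (pt a b) (pt c d) = √((a - c) ^ 2 + (b - d) ^ 2) := by
  simp [EuclideanSpace.dist_eq, pt, Fin.sum_univ_two, Real.dist_eq, sq_abs]

lemma pt_mem_hexTile (m n : ℤ) {u v x y : ℝ} (huv : pt u v ∈ hexagon)
    (hx : x = u + m * (3 / 2)) (hy : y = v + m * (√3 / 2) + n * √3) : pt x y ∈ hexTile m n :=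
  ⟨_, huv, by simp only [pt_smul, pt_add, hx, hy]; ring_nf⟩

lemma pt_half_sqrt_three_half_mem_hexTile :
    pt (1 / 2) (√3 / 2) ∈ hexTile 0 0 ∩ hexTile 1 0 ∩ hexTile 0 1 := by
  refine ⟨⟨pt_mem_hexTile 0 0 (u := 1 / 2) (v := √3 / 2) ?_ ?_ ?_,
    pt_mem_hexTile 1 0 (u := -1) (v := 0) ?_ ?_ ?_⟩,
    pt_mem_hexTile 0 1 (u := 1 / 2) (v := -(√3 / 2)) ?_ ?_ ?_⟩
  all_goals first | exact subset_convexHull ℝ _ (by simp) | (push_cast; ring)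

lemma pt_one_zero_mem_hexTile :
    pt 1 0 ∈ hexTile 0 0 ∩ hexTile 1 0 ∩ hexTile 1 (-1) := by
  refine ⟨⟨pt_mem_hexTile 0 0 (u := 1) (v := 0) ?_ ?_ ?_,
    pt_mem_hexTile 1 0 (u := -(1 / 2)) (v := -(√3 / 2)) ?_ ?_ ?_⟩,
    pt_mem_hexTile 1 (-1) (u := -(1 / 2)) (v := √3 / 2) ?_ ?_ ?_⟩
  all_goals first | exact subset_convexHull ℝ _ (by simp) | (push_cast; ring)

lemma dist_pt_half_sqrt_three_half_pt_one_zero : dist (pt (1 / 2) (√3 / 2)) (pt 1 0) = 1 := by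
  rw [dist_pt, Real.sqrt_eq_one]
  norm_num [div_pow]

/-- There is a point such that the closed disk of radius `1/2` around it intersects at
least four tiles of the regular hexagonal tiling with edge length 1: the bound `1/2` is
tight. -/
theorem hexagonal_tiling_radius_half_is_tight :
    ∃ p : EuclideanSpace ℝ (Fin 2),
      4 ≤ {q : ℤ × ℤ | (hexTile q.1 q.2 ∩ closedBall p (1 / 2)).Nonempty}.encard := by
  set v := pt (1 / 2) (√3 / 2)
  set w := pt 1 0
  -- `v` and `w` are the endpoints of the edge shared by `hexTile 0 0` and `hexTile 1 0`; each
  -- is also a vertex of a third tile, and the disk about the edge's midpoint reaches both.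
  set p := midpoint ℝ v w
  have hv : v ∈ closedBall p (1 / 2) := by
    rw [mem_closedBall, dist_left_midpoint, dist_pt_half_sqrt_three_half_pt_one_zero]; norm_num
  have hw : w ∈ closedBall p (1 / 2) := by
    rw [mem_closedBall, dist_right_midpoint, dist_pt_half_sqrt_three_half_pt_one_zero]; norm_num
  obtain ⟨⟨hv00, -⟩, hv01⟩ := pt_half_sqrt_three_half_mem_hexTile
  obtain ⟨⟨-, hw10⟩, hw1m1⟩ := pt_one_zero_mem_hexTile
  refine ⟨p, ?_⟩
  calc (4 : ℕ∞) = ({(0, 0), (1, 0), (0, 1), (1, -1)} : Set (ℤ × ℤ)).encard := by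
        norm_num [Set.encard_insert_of_notMem]
    _ ≤ _ := by
      refine Set.encard_mono ?_
      rintro q (rfl | rfl | rfl | rfl)
      exacts [⟨v, hv00, hv⟩, ⟨w, hw10, hw⟩, ⟨v, hv01, hv⟩, ⟨w, hw1m1, hw⟩]
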